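/- arXiv:1404.6981 — 6 statements merged into one kernel-verified Lean document; each statement's English description precedes it below -/
import Mathlib

section
/- Let n ≥ 2 and let M = (m_ij) be an n×n real matrix with strictly positive entries that is reciprocal, i.e. m_ji = 1/m_ij for all i, j. Define the multiplicative error function e : (ℝ₊)ⁿ → ℝ by e(x₁,…,xₙ) = Σ_{i=1}^{n} Σ_{j=1}^{n} (ln m_ij − ln(x_i/x_j))². Suppose μ ∈ (ℝ₊)ⁿ satisfies the geometric averaging equations μ_i^{n−1} = Π_{j≠i} (m_ij · μ_j) for every i, and suppose in addition that μ_i < (n−1) · Σ_{j≠i} μ_j for every i. Then μ is a local minimizer of e on the open positive orthant. -/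
/-!
In logarithmic coordinates the error is the least-squares functional
`∑ᵢⱼ (rᵢⱼ - (dᵢ - dⱼ))²`, where `rᵢⱼ = ln mᵢⱼ - ln (μᵢ / μⱼ)` is the residual at `μ` and
`d = ln x - ln μ`. Taking logarithms of the geometric averaging equations says that every row
of `r` sums to zero; reciprocity makes `r` antisymmetric, so every column sums to zero as well.
Then the cross term `∑ᵢⱼ rᵢⱼ (dᵢ - dⱼ)` vanishes and the error at `x` exceeds the error at `μ`
by `∑ᵢⱼ (dᵢ - dⱼ)² ≥ 0`: `μ` is even a global minimizer on the positive orthant.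
-/

open Finset Real

section LeastSquares

variable {ι : Type*} [Fintype ι]

theorem sum_eq_zero_of_antisymm {r : ι → ι → ℝ} (hr : ∀ i j, r j i = -r i j)
    (hrow : ∀ i, ∑ j, r i j = 0) (j : ι) : ∑ i, r i j = 0 := by
  rw [sum_congr rfl fun i _ => hr j i, sum_neg_distrib, hrow, neg_zero]

theorem sum_sum_sq_sub_sub_eq {r : ι → ι → ℝ} (hrow : ∀ i, ∑ j, r i j = 0)
    (hcol : ∀ j, ∑ i, r i j = 0) (d : ι → ℝ) :
    ∑ i, ∑ j, (r i j - (d i - d j)) ^ 2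
      = ∑ i, ∑ j, r i j ^ 2 + ∑ i, ∑ j, (d i - d j) ^ 2 := by
  have hcross : ∑ i, ∑ j, r i j * (d i - d j) = 0 := by
    simp only [mul_sub, sum_sub_distrib, ← sum_mul, hrow, zero_mul, sum_const_zero]
    rw [sum_comm]
    simp only [← sum_mul, hcol, zero_mul, sum_const_zero, sub_zero]
  have hexpand : ∀ i j, (r i j - (d i - d j)) ^ 2
      = r i j ^ 2 + (d i - d j) ^ 2 - 2 * (r i j * (d i - d j)) := fun i j => by ring
  simp only [hexpand, sum_sub_distrib, sum_add_distrib, ← mul_sum, hcross, mul_zero, sub_zero]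

theorem sum_sum_sq_le_sum_sum_sq_sub_sub {r : ι → ι → ℝ} (hrow : ∀ i, ∑ j, r i j = 0)
    (hcol : ∀ j, ∑ i, r i j = 0) (d : ι → ℝ) :
    ∑ i, ∑ j, r i j ^ 2 ≤ ∑ i, ∑ j, (r i j - (d i - d j)) ^ 2 := by
  rw [sum_sum_sq_sub_sub_eq hrow hcol d]
  exact le_add_of_nonneg_right (by positivity)

end LeastSquares

section LogResidual

variable {ι : Type*} (m : ι → ι → ℝ)

/-- The entries of the multiplicative error `e x = ∑ᵢⱼ (logResidual m x i j) ^ 2`. -/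
noncomputable def logResidual (x : ι → ℝ) (i j : ι) : ℝ :=
  log (m i j) - log (x i / x j)

theorem logResidual_antisymm (hrec : ∀ i j, m j i = 1 / m i j) (x : ι → ℝ) (i j : ι) :
    logResidual m x j i = -logResidual m x i j := by
  rw [logResidual, logResidual, hrec, one_div, log_inv, ← inv_div, log_inv]
  ring

theorem logResidual_eq_sub {x y : ι → ℝ} (hx : ∀ i, 0 < x i) (hy : ∀ i, 0 < y i) (i j : ι) :
    logResidual m x i j
      = logResidual m y i j - ((log (x i) - log (y i)) - (log (x j) - log (y j))) := by
  simp only [logResidual, log_div (hx i).ne' (hx j).ne', log_div (hy i).ne' (hy j).ne']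
  ring

theorem logResidual_eq_log (hm : ∀ i j, 0 < m i j) {x : ι → ℝ} (hx : ∀ i, 0 < x i) (i j : ι) :
    logResidual m x i j = log (m i j * x j / x i) := by
  rw [logResidual, ← log_div (hm i j).ne' (div_pos (hx i) (hx j)).ne', div_div_eq_mul_div]

theorem sum_logResidual_eq_zero [Fintype ι] [DecidableEq ι] (hm : ∀ i j, 0 < m i j)
    (hrec : ∀ i j, m j i = 1 / m i j) {μ : ι → ℝ} (hμ : ∀ i, 0 < μ i)
    (hgeo : ∀ i, μ i ^ (Fintype.card ι - 1) = ∏ j ∈ univ.erase i, (m i j * μ j)) (i : ι) :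
    ∑ j, logResidual m μ i j = 0 := by
  have hdiag : logResidual m μ i i = 0 := by
    linarith [logResidual_antisymm m hrec μ i i]
  have hprod : ∏ j ∈ univ.erase i, (m i j * μ j / μ i) = 1 := by
    rw [prod_div_distrib, ← hgeo, prod_const, card_erase_of_mem (mem_univ i), card_univ,
      div_self (pow_pos (hμ i) _).ne']
  rw [← sum_erase_add _ _ (mem_univ i), hdiag, add_zero]
  simp only [logResidual_eq_log m hm hμ]
  rw [← log_prod fun j _ => (div_pos (mul_pos (hm i j) (hμ j)) (hμ i)).ne', hprod, log_one]

theorem isMinOn_sum_sq_logResidual [Fintype ι] {μ : ι → ℝ} (hμ : ∀ i, 0 < μ i)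
    (hrow : ∀ i, ∑ j, logResidual m μ i j = 0) (hcol : ∀ j, ∑ i, logResidual m μ i j = 0) :
    IsMinOn (fun x => ∑ i, ∑ j, logResidual m x i j ^ 2) {x | ∀ i, 0 < x i} μ := by
  intro x hx
  simp only [Set.mem_ofPred_eq, logResidual_eq_sub m hx hμ]
  exact sum_sum_sq_le_sum_sum_sq_sub_sub hrow hcol _

end LogResidual

theorem hre_geometric_local_min_general
    (n : ℕ)
    (m : Fin n → Fin n → ℝ)
    (hmpos : ∀ i j, 0 < m i j)
    (hrec : ∀ i j, m j i = 1 / m i j)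
    (μ : Fin n → ℝ) (hμpos : ∀ i, 0 < μ i)
    (hgeo : ∀ i, μ i ^ (n - 1) = ∏ j ∈ Finset.univ.erase i, (m i j * μ j)) :
    IsLocalMinOn
      (fun x : Fin n → ℝ => ∑ i, ∑ j, (Real.log (m i j) - Real.log (x i / x j)) ^ 2)
      {x : Fin n → ℝ | ∀ i, 0 < x i} μ := by
  have hrow : ∀ i, ∑ j, logResidual m μ i j = 0 :=
    sum_logResidual_eq_zero m hmpos hrec hμpos (by simpa only [Fintype.card_fin] using hgeo)
  have hcol : ∀ j, ∑ i, logResidual m μ i j = 0 :=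
    sum_eq_zero_of_antisymm (logResidual_antisymm m hrec μ) hrow
  exact (isMinOn_sum_sq_logResidual m hμpos hrow hcol).localize

/-- For a reciprocal positive `n × n` matrix `M` (`n ≥ 2`), if the positive
vector `μ` satisfies the geometric averaging equations `μ i ^ (n-1) = ∏_{j ≠ i} (m i j * μ j)`
and moreover `μ i < (n-1) * ∑_{j ≠ i} μ j` for every `i`, then `μ` is a local minimizer of the
multiplicative error function `e` on the open positive orthant. -/
theorem hre_geometric_local_min
    (n : ℕ) (hn : 2 ≤ n)
    (m : Fin n → Fin n → ℝ)
    (hmpos : ∀ i j, 0 < m i j)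
    (hrec : ∀ i j, m j i = 1 / m i j)
    (μ : Fin n → ℝ) (hμpos : ∀ i, 0 < μ i)
    (hgeo : ∀ i, μ i ^ (n - 1) = ∏ j ∈ Finset.univ.erase i, (m i j * μ j))
    (hdom : ∀ i, μ i < ((n : ℝ) - 1) * ∑ j ∈ Finset.univ.erase i, μ j) :
    IsLocalMinOn
      (fun x : Fin n → ℝ => ∑ i, ∑ j, (Real.log (m i j) - Real.log (x i / x j)) ^ 2)
      {x : Fin n → ℝ | ∀ i, 0 < x i} μ :=
  hre_geometric_local_min_general n m hmpos hrec μ hμpos hgeo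
end

section
/- Let n ≥ 2 and let M = (m_ij) be an n×n real matrix with strictly positive entries that is reciprocal, i.e. m_ji = 1/m_ij for all i, j. Define e : (ℝ₊)ⁿ → ℝ by e(x₁,…,xₙ) = Σ_{i=1}^{n} Σ_{j=1}^{n} (ln m_ij − ln(x_i/x_j))². A strictly positive vector μ ∈ (ℝ₊)ⁿ is a critical point of e (all partial derivatives of e vanish at μ) if and only if for every i it holds that (n−1) · ln μ_i = Σ_{j≠i} ln (m_ij · μ_j), equivalently μ_i^{n−1} = Π_{j≠i} (m_ij · μ_j). -/
open Finset Real Function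

/-!
In logarithmic coordinates `y = log x` the error is `∑ a b, (L a b - y a + y b) ^ 2` with
`L = log m` antisymmetric (reciprocity), so `L i i = 0` and the antisymmetry pairs the terms
`(i, j)` and `(j, i)`: the `i`-th partial derivative of `e` is
`-(4 / x i) * ∑ j, (L i j + y j - y i)`. It vanishes iff
`(n - 1) * y i = ∑ j ≠ i, (L i j + y j)`, and exponentiating gives the product form.
-/

section
variable {ι : Type*} [DecidableEq ι]

theorem hasDerivAt_log_div_update {x : ι → ℝ} (hx : ∀ j, x j ≠ 0) (i a b : ι) :
    HasDerivAt (fun t => log (update x i t a / update x i t b))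
      (((Pi.single i 1 : ι → ℝ) a - (Pi.single i 1 : ι → ℝ) b) / x i) (x i) := by
  have hupd (c : ι) : HasDerivAt (fun t => update x i t c) ((Pi.single i 1 : ι → ℝ) c) (x i) :=
    hasDerivAt_pi.1 (hasDerivAt_update x i (x i)) c
  have h := ((hupd a).fun_div (hupd b) (by simpa using hx b)).log
    (by simpa using div_ne_zero (hx a) (hx b))
  simp only [update_eq_self] at h
  convert h using 1
  have hxa := hx a
  have hxb := hx b
  by_cases ha : a = i <;> by_cases hb : b = i
  · subst ha hb; simp
  · subst ha; simp [hb]; field_simp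
  · subst hb; simp [ha]; field_simp
  · simp [ha, hb]

variable [Fintype ι]

theorem sum_sum_mul_single_sub_single {r : ι → ι → ℝ} (hr : ∀ a b, r b a = -r a b) (i : ι) :
    ∑ a, ∑ b, r a b * ((Pi.single i 1 : ι → ℝ) a - (Pi.single i 1 : ι → ℝ) b) =
      2 * ∑ j, r i j := by
  simp [mul_sub, sum_sub_distrib, Pi.single_apply, hr _ i]
  ring

noncomputable def multiplicativeError (m : ι → ι → ℝ) (x : ι → ℝ) : ℝ :=
  ∑ a, ∑ b, (log (m a b) - log (x a / x b)) ^ 2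

theorem hasDerivAt_multiplicativeError_update {m : ι → ι → ℝ} (hrec : ∀ a b, m b a = 1 / m a b)
    {x : ι → ℝ} (hx : ∀ j, x j ≠ 0) (i : ι) :
    HasDerivAt (fun t => multiplicativeError m (update x i t))
      (-(4 / x i) * ∑ j, (log (m i j) - log (x i / x j))) (x i) := by
  have hanti (a b : ι) : log (m b a) - log (x b / x a) = -(log (m a b) - log (x a / x b)) := by
    rw [hrec a b, one_div, log_inv, ← inv_div (x a) (x b), log_inv]
    ring
  have h := HasDerivAt.fun_sum (u := univ) fun a _ => HasDerivAt.fun_sum (u := univ) fun b _ =>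
    ((hasDerivAt_const (x i) (log (m a b))).fun_sub (hasDerivAt_log_div_update hx i a b)).fun_pow 2
  simp only [update_eq_self] at h
  refine h.congr_deriv ?_
  rw [show -(4 / x i) * _ = -(2 / x i) * (2 * ∑ j, (log (m i j) - log (x i / x j))) by ring,
    ← sum_sum_mul_single_sub_single hanti, mul_sum]
  refine sum_congr rfl fun a _ => ?_
  rw [mul_sum]
  refine sum_congr rfl fun b _ => ?_
  push_cast
  ring

theorem sum_log_sub_log_div_eq {m : ι → ι → ℝ} (hrec : ∀ a b, m b a = 1 / m a b) {i : ι}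
    (hm : ∀ j, m i j ≠ 0) {x : ι → ℝ} (hx : ∀ j, x j ≠ 0) :
    ∑ j, (log (m i j) - log (x i / x j)) =
      ∑ j ∈ univ.erase i, log (m i j * x j) - (Fintype.card ι - 1 : ℝ) * log (x i) := by
  have hdiag : log (m i i) = 0 := by
    have := congrArg log (hrec i i)
    rw [one_div, log_inv] at this
    linarith
  rw [← add_sum_erase _ _ (mem_univ i), div_self (hx i), log_one, hdiag, sub_zero, zero_add,
    ← card_univ, ← Nat.cast_pred (card_pos.2 ⟨i, mem_univ i⟩), ← card_erase_of_mem (mem_univ i),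
    ← nsmul_eq_mul, ← sum_const, ← sum_sub_distrib]
  refine sum_congr rfl fun j _ => ?_
  rw [log_mul (hm j) (hx j), log_div (hx i) (hx j)]
  ring

end

theorem pow_eq_prod_iff_mul_log_eq_sum_log {ι : Type*} {s : Finset ι} {a : ℝ} (ha : 0 < a)
    {b : ι → ℝ} (hb : ∀ j ∈ s, 0 < b j) (k : ℕ) :
    a ^ k = ∏ j ∈ s, b j ↔ k * log a = ∑ j ∈ s, log (b j) := by
  rw [← log_pow, ← log_prod fun j hj => (hb j hj).ne']
  exact (log_injOn_pos.eq_iff (pow_pos ha k) (prod_pos hb)).symm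

theorem hre_geometric_critical_point_iff_general
    (n : ℕ)
    (m : Fin n → Fin n → ℝ)
    (hmpos : ∀ i j, 0 < m i j)
    (hrec : ∀ i j, m j i = 1 / m i j)
    (μ : Fin n → ℝ) (hμpos : ∀ i, 0 < μ i) :
    (∀ i : Fin n,
        HasDerivAt
          (fun t : ℝ =>
            ∑ a, ∑ b,
              (Real.log (m a b) -
                Real.log (Function.update μ i t a / Function.update μ i t b)) ^ 2)
          0 (μ i)) ↔
      ((∀ i : Fin n,
          ((n : ℝ) - 1) * Real.log (μ i) =
            ∑ j ∈ Finset.univ.erase i, Real.log (m i j * μ j)) ∧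
        ∀ i : Fin n, μ i ^ (n - 1) = ∏ j ∈ Finset.univ.erase i, (m i j * μ j)) := by
  have hμ (j : Fin n) : μ j ≠ 0 := (hμpos j).ne'
  have hcrit (i : Fin n) : HasDerivAt (fun t => multiplicativeError m (update μ i t)) 0 (μ i) ↔
      ((n : ℝ) - 1) * log (μ i) = ∑ j ∈ univ.erase i, log (m i j * μ j) := by
    have hderiv := hasDerivAt_multiplicativeError_update hrec hμ i
    rw [sum_log_sub_log_div_eq hrec (fun j => (hmpos i j).ne') hμ, Fintype.card_fin] at hderiv
    rw [eq_comm, ← sub_eq_zero, ← mul_eq_zero_iff_left (by simpa using hμ i : -(4 / μ i) ≠ 0)]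
    exact ⟨fun h => hderiv.unique h, fun h => h ▸ hderiv⟩
  have hpow (i : Fin n) : ((n : ℝ) - 1) * log (μ i) = ∑ j ∈ univ.erase i, log (m i j * μ j) ↔
      μ i ^ (n - 1) = ∏ j ∈ univ.erase i, (m i j * μ j) := by
    rw [pow_eq_prod_iff_mul_log_eq_sum_log (hμpos i) fun j _ => mul_pos (hmpos i j) (hμpos j),
      Nat.cast_pred i.pos]
  show (∀ i, HasDerivAt (fun t => multiplicativeError m (update μ i t)) 0 (μ i)) ↔ _
  simp only [hcrit, ← hpow, and_self]

/-- For a reciprocal positive `n × n` matrix `M` (`n ≥ 2`), a strictly positive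
vector `μ` is a critical point of the multiplicative error function `e` (all partial
derivatives vanish at `μ`) if and only if for every `i` it holds that
`(n-1) * ln (μ i) = ∑_{j ≠ i} ln (m i j * μ j)`, equivalently
`μ i ^ (n-1) = ∏_{j ≠ i} (m i j * μ j)`. -/
theorem hre_geometric_critical_point_iff
    (n : ℕ) (hn : 2 ≤ n)
    (m : Fin n → Fin n → ℝ)
    (hmpos : ∀ i j, 0 < m i j)
    (hrec : ∀ i j, m j i = 1 / m i j)
    (μ : Fin n → ℝ) (hμpos : ∀ i, 0 < μ i) :
    (∀ i : Fin n,
        HasDerivAt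
          (fun t : ℝ =>
            ∑ a, ∑ b,
              (Real.log (m a b) -
                Real.log (Function.update μ i t a / Function.update μ i t b)) ^ 2)
          0 (μ i)) ↔
      ((∀ i : Fin n,
          ((n : ℝ) - 1) * Real.log (μ i) =
            ∑ j ∈ Finset.univ.erase i, Real.log (m i j * μ j)) ∧
        ∀ i : Fin n, μ i ^ (n - 1) = ∏ j ∈ Finset.univ.erase i, (m i j * μ j)) :=
  hre_geometric_critical_point_iff_general n m hmpos hrec μ hμpos
end

section
/- Let n ≥ 2 and let M = (m_ij) be an n×n real matrix with strictly positive entries that is reciprocal, i.e. m_ji = 1/m_ij for all i, j. Define e : (ℝ₊)ⁿ → ℝ by e(x₁,…,xₙ) = Σ_{i=1}^{n} Σ_{j=1}^{n} (ln m_ij − ln(x_i/x_j))². Suppose μ ∈ (ℝ₊)ⁿ satisfies μ_i^{n−1} = Π_{j≠i} (m_ij · μ_j) for every i. Then the Hessian matrix H of e at the point μ has entries H_ii = 4(n−1)/μ_i² on the diagonal and H_ij = −4/(μ_i μ_j) for i ≠ j. -/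
/-!
With residuals `r_ab(x) = log m_ab - (log x_a - log x_b)` the error is `∑ r_ab²`, and
`∂e/∂x_j = (2 / x_j) ∑_a (r_aj - r_ja)`. Differentiating once more, the term coming from
`∂(2 / x_j)` carries this balance as a factor, and it vanishes at `μ`: reciprocity makes `r`
antisymmetric, and the geometric-mean equations say that each row of residuals sums to zero.
What is left is `(2 / μ_j) · 2 (n δ_ij / μ_j - 1 / μ_i)`.
-/

open Real Finset Filter Topology ContinuousLinearMap

namespace MultiplicativeError

variable {ι : Type*}

noncomputable def residual (L : ι → ι → ℝ) (x : ι → ℝ) (a b : ι) : ℝ :=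
  L a b - (log (x a) - log (x b))

theorem residual_swap {L : ι → ι → ℝ} (hL : ∀ a b, L b a = -L a b) (x : ι → ℝ) (a b : ι) :
    residual L x b a = -residual L x a b := by
  simp only [residual, hL a b]; ring

variable [Fintype ι]

noncomputable def residualBalance (L : ι → ι → ℝ) (x : ι → ℝ) (j : ι) : ℝ :=
  ∑ a, (residual L x a j - residual L x j a)

theorem residualBalance_eq_of_antisymm {L : ι → ι → ℝ} (hL : ∀ a b, L b a = -L a b)
    (x : ι → ℝ) (j : ι) : residualBalance L x j = -2 * ∑ b, residual L x j b := by
  simp only [residualBalance, residual_swap hL x j, mul_sum]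
  exact sum_congr rfl fun b _ => by ring

theorem eventually_forall_pos {x : ι → ℝ} (hx : ∀ k, 0 < x k) :
    ∀ᶠ y in 𝓝 x, ∀ k, 0 < y k :=
  eventually_all.2 fun k => (continuous_apply k).continuousAt.eventually (lt_mem_nhds (hx k))

theorem sum_sq_log_div_eventuallyEq (L : ι → ι → ℝ) {x : ι → ℝ} (hx : ∀ k, 0 < x k) :
    (fun y => ∑ a, ∑ b, (L a b - log (y a / y b)) ^ 2) =ᶠ[𝓝 x]
      fun y => ∑ a, ∑ b, residual L y a b ^ 2 := by
  filter_upwards [eventually_forall_pos hx] with y hy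
  simp only [residual, log_div (hy _).ne' (hy _).ne']

theorem hasFDerivAt_residual (L : ι → ι → ℝ) {x : ι → ℝ} (hx : ∀ k, 0 < x k) (a b : ι) :
    HasFDerivAt (fun y => residual L y a b)
      ((x b)⁻¹ • (proj b : (ι → ℝ) →L[ℝ] ℝ) - (x a)⁻¹ • proj a) x := by
  have hlog k := (hasFDerivAt_apply k x).log (hx k).ne'
  exact (((hlog a).sub (hlog b)).const_sub (L a b)).congr_fderiv (neg_sub _ _)

theorem hasFDerivAt_sum_sq_residual (L : ι → ι → ℝ) {x : ι → ℝ} (hx : ∀ k, 0 < x k) :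
    HasFDerivAt (fun y => ∑ a, ∑ b, residual L y a b ^ 2)
      (∑ a, ∑ b, (2 * residual L x a b) •
        ((x b)⁻¹ • (proj b : (ι → ℝ) →L[ℝ] ℝ) - (x a)⁻¹ • proj a)) x :=
  HasFDerivAt.fun_sum fun a _ => HasFDerivAt.fun_sum fun b _ =>
    ((hasFDerivAt_residual L hx a b).pow 2).congr_fderiv (by simp)

theorem hasFDerivAt_residualBalance (L : ι → ι → ℝ) {x : ι → ℝ} (hx : ∀ k, 0 < x k) (j : ι) :
    HasFDerivAt (fun y => residualBalance L y j)
      (∑ a, (((x j)⁻¹ • (proj j : (ι → ℝ) →L[ℝ] ℝ) - (x a)⁻¹ • proj a) -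
        ((x a)⁻¹ • proj a - (x j)⁻¹ • proj j))) x :=
  HasFDerivAt.fun_sum fun a _ =>
    (hasFDerivAt_residual L hx a j).sub (hasFDerivAt_residual L hx j a)

variable [DecidableEq ι]

theorem sum_residual_eq_zero_of_geometric {m : ι → ι → ℝ} {μ : ι → ℝ}
    (hm : ∀ a b, 0 < m a b) (hμ : ∀ k, 0 < μ k) {j : ι} (hjj : log (m j j) = 0)
    (hgeo : μ j ^ (Fintype.card ι - 1) = ∏ b ∈ univ.erase j, (m j b * μ b)) :
    ∑ b, residual (fun a b => log (m a b)) μ j b = 0 := by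
  have hlog : ((Fintype.card ι : ℝ) - 1) * log (μ j) =
      ∑ b ∈ univ.erase j, (log (m j b) + log (μ b)) := by
    have h := congrArg log hgeo
    rw [log_pow, log_prod fun b _ => (mul_pos (hm j b) (hμ b)).ne',
      Nat.cast_pred (Fintype.card_pos_iff.2 ⟨j⟩)] at h
    rw [h]
    exact sum_congr rfl fun b _ => log_mul (hm j b).ne' (hμ b).ne'
  calc ∑ b, residual (fun a b => log (m a b)) μ j b
      = ∑ b, (log (m j b) + log (μ b)) - Fintype.card ι * log (μ j) := by
        rw [← nsmul_eq_mul, ← card_univ, ← sum_const, ← sum_sub_distrib]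
        exact sum_congr rfl fun b _ => by rw [residual]; ring
    _ = 0 := by
      rw [← add_sum_erase _ _ (mem_univ j), ← hlog, hjj]
      ring

theorem fderiv_sum_sq_residual_single (L : ι → ι → ℝ) {x : ι → ℝ} (hx : ∀ k, 0 < x k)
    (j : ι) :
    fderiv ℝ (fun y => ∑ a, ∑ b, residual L y a b ^ 2) x (Pi.single j 1) =
      2 * (x j)⁻¹ * residualBalance L x j := by
  rw [(hasFDerivAt_sum_sq_residual L hx).fderiv]
  simp only [_root_.sum_apply, smul_apply, sub_apply, proj_apply, Pi.single_apply, smul_eq_mul,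
    mul_ite, mul_one, mul_zero, mul_sub, sum_sub_distrib, sum_ite_eq', sum_ite_irrel,
    sum_const_zero, mem_univ, if_true]
  simp only [residualBalance, sum_sub_distrib, ← sum_mul, ← mul_sum]
  ring

theorem fderiv_residualBalance_single (L : ι → ι → ℝ) {x : ι → ℝ} (hx : ∀ k, 0 < x k)
    (i j : ι) :
    fderiv ℝ (fun y => residualBalance L y j) x (Pi.single i 1) =
      2 * (Fintype.card ι * (if i = j then (x j)⁻¹ else 0) - (x i)⁻¹) := by
  rw [(hasFDerivAt_residualBalance L hx j).fderiv]
  simp only [_root_.sum_apply, smul_apply, sub_apply, proj_apply, Pi.single_apply, smul_eq_mul,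
    mul_ite, mul_one, mul_zero, sum_sub_distrib, sum_ite_eq', mem_univ, if_true, sum_const,
    card_univ, nsmul_eq_mul, eq_comm (a := j)]
  ring

theorem fderiv_inv_mul_residualBalance_single (L : ι → ι → ℝ) {x : ι → ℝ}
    (hx : ∀ k, 0 < x k) {j : ι} (h0 : residualBalance L x j = 0) (i : ι) :
    fderiv ℝ (fun y => 2 * (y j)⁻¹ * residualBalance L y j) x (Pi.single i 1) =
      2 * (x j)⁻¹ * (2 * (Fintype.card ι * (if i = j then (x j)⁻¹ else 0) - (x i)⁻¹)) := by
  have hinv := (hasDerivAt_inv (hx j).ne').comp_hasFDerivAt x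
    (proj j : (ι → ℝ) →L[ℝ] ℝ).hasFDerivAt
  have hbal := hasFDerivAt_residualBalance L hx j
  have hgrad : HasFDerivAt (fun y => 2 * (y j)⁻¹ * residualBalance L y j) _ x :=
    (hinv.const_mul 2).mul hbal
  rw [hgrad.fderiv, ← fderiv_residualBalance_single L hx, hbal.fderiv]
  simp [h0]

end MultiplicativeError

open MultiplicativeError

theorem hre_geometric_hessian_general
    (n : ℕ)
    (m : Fin n → Fin n → ℝ)
    (hmpos : ∀ i j, 0 < m i j)
    (hrec : ∀ i j, m j i = 1 / m i j)
    (μ : Fin n → ℝ) (hμpos : ∀ i, 0 < μ i)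
    (hgeo : ∀ i, μ i ^ (n - 1) = ∏ j ∈ Finset.univ.erase i, (m i j * μ j)) :
    ∀ i j : Fin n,
      fderiv ℝ
        (fun x : Fin n → ℝ =>
          fderiv ℝ
            (fun y : Fin n → ℝ =>
              ∑ a, ∑ b, (Real.log (m a b) - Real.log (y a / y b)) ^ 2)
            x (Pi.single j (1 : ℝ)))
        μ (Pi.single i (1 : ℝ)) =
      if i = j then 4 * ((n : ℝ) - 1) / (μ i) ^ 2 else -4 / (μ i * μ j) := by
  intro i j
  set L : Fin n → Fin n → ℝ := fun a b => log (m a b)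
  have hL : ∀ a b, L b a = -L a b := fun a b => by simp only [L, hrec a b, one_div, log_inv]
  have hbal : residualBalance L μ j = 0 := by
    rw [residualBalance_eq_of_antisymm hL, sum_residual_eq_zero_of_geometric hmpos hμpos
      (by linarith [hL j j]) (by simpa using hgeo j), mul_zero]
  have hgrad : (fun x => fderiv ℝ (fun y => ∑ a, ∑ b, (L a b - log (y a / y b)) ^ 2) x
      (Pi.single j 1)) =ᶠ[𝓝 μ] fun x => 2 * (x j)⁻¹ * residualBalance L x j := by
    filter_upwards [eventually_forall_pos hμpos] with x hx
    rw [(sum_sq_log_div_eventuallyEq L hx).fderiv_eq, fderiv_sum_sq_residual_single L hx]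
  rw [hgrad.fderiv_eq, fderiv_inv_mul_residualBalance_single L hμpos hbal, Fintype.card_fin]
  split_ifs with hij
  · subst hij
    field_simp
    ring
  · field_simp
    ring

/-- For a reciprocal positive `n × n` matrix `M` (`n ≥ 2`) and the multiplicative
error function `e`, if the positive vector `μ` satisfies the geometric averaging equations,
then the Hessian of `e` at `μ` has entries `4(n-1)/μ i ^ 2` on the diagonal and
`-4/(μ i * μ j)` off the diagonal. -/
theorem hre_geometric_hessian
    (n : ℕ) (hn : 2 ≤ n)
    (m : Fin n → Fin n → ℝ)
    (hmpos : ∀ i j, 0 < m i j)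
    (hrec : ∀ i j, m j i = 1 / m i j)
    (μ : Fin n → ℝ) (hμpos : ∀ i, 0 < μ i)
    (hgeo : ∀ i, μ i ^ (n - 1) = ∏ j ∈ Finset.univ.erase i, (m i j * μ j)) :
    ∀ i j : Fin n,
      fderiv ℝ
        (fun x : Fin n → ℝ =>
          fderiv ℝ
            (fun y : Fin n → ℝ =>
              ∑ a, ∑ b, (Real.log (m a b) - Real.log (y a / y b)) ^ 2)
            x (Pi.single j (1 : ℝ)))
        μ (Pi.single i (1 : ℝ)) =
      if i = j then 4 * ((n : ℝ) - 1) / (μ i) ^ 2 else -4 / (μ i * μ j) :=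
  hre_geometric_hessian_general n m hmpos hrec μ hμpos hgeo
end

section
/- Let A be an n×n real matrix all of whose off-diagonal entries are nonpositive. If there exists a diagonal matrix D with strictly positive diagonal entries such that every row sum of the product A·D is strictly positive, then A is invertible and every entry of A⁻¹ is nonnegative. -/
/-!
Scaling the columns of `A` by `d` gives a Z-matrix `B = A * diagonal d` with positive row sums.
Such a `B` is monotone: if `B *ᵥ x ≥ 0` then `x ≥ 0`, because at an index `k` where `x` is
minimal, `(B *ᵥ x) k ≥ (∑ j, B k j) * x k`. Monotonicity makes `B` injective, hence invertible,
and applied to the columns of `B⁻¹` (whose images are standard basis vectors) it gives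
`B⁻¹ ≥ 0`. Finally `A⁻¹ = diagonal d * B⁻¹`.
-/

namespace Matrix

variable {ι R : Type*} [Fintype ι] [Field R] [LinearOrder R] [IsStrictOrderedRing R]

def IsZMatrix (B : Matrix ι ι R) : Prop :=
  ∀ i j, i ≠ j → B i j ≤ 0

namespace IsZMatrix

variable {B : Matrix ι ι R}

theorem mul_diagonal [DecidableEq ι] (hB : B.IsZMatrix) {d : ι → R} (hd : 0 ≤ d) :
    (B * diagonal d).IsZMatrix := fun i j hij => by
  rw [Matrix.mul_diagonal]
  exact mul_nonpos_of_nonpos_of_nonneg (hB i j hij) (hd j)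

theorem mulVec_le_sum_row_mul (hB : B.IsZMatrix) {x : ι → R} {k : ι}
    (hk : ∀ j, x k ≤ x j) : (B *ᵥ x) k ≤ (∑ j, B k j) * x k := by
  rw [mulVec, dotProduct, Finset.sum_mul]
  refine Finset.sum_le_sum fun j _ => ?_
  rcases eq_or_ne k j with rfl | hkj
  · exact le_rfl
  · exact mul_le_mul_of_nonpos_left (hk j) (hB k j hkj)

variable (hB : B.IsZMatrix) (hrow : ∀ i, 0 < ∑ j, B i j)
include hB hrow

theorem nonneg_of_mulVec_nonneg {x : ι → R} (hx : 0 ≤ B *ᵥ x) : 0 ≤ x := by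
  by_contra hneg
  obtain ⟨k₀, hk₀⟩ : ∃ k, x k < 0 := by simpa [Pi.le_def] using hneg
  obtain ⟨k, -, hk⟩ := Finset.univ.exists_min_image x ⟨k₀, Finset.mem_univ k₀⟩
  have hxk : x k < 0 := (hk k₀ (Finset.mem_univ _)).trans_lt hk₀
  have hxk' : 0 ≤ (B *ᵥ x) k := hx k
  linarith [hB.mulVec_le_sum_row_mul fun j => hk j (Finset.mem_univ j),
    mul_neg_of_pos_of_neg (hrow k) hxk]

theorem eq_zero_of_mulVec_eq_zero {v : ι → R} (hv : B *ᵥ v = 0) : v = 0 := by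
  refine le_antisymm ?_ (hB.nonneg_of_mulVec_nonneg hrow hv.ge)
  simpa using hB.nonneg_of_mulVec_nonneg hrow (x := -v) (by simp [mulVec_neg, hv])

theorem det_ne_zero [DecidableEq ι] : B.det ≠ 0 := fun h => by
  obtain ⟨v, hv0, hv⟩ := exists_mulVec_eq_zero_iff.mpr h
  exact hv0 (hB.eq_zero_of_mulVec_eq_zero hrow hv)

theorem inv_nonneg [DecidableEq ι] (i j : ι) : 0 ≤ B⁻¹ i j := by
  have hunit : IsUnit B.det := (hB.det_ne_zero hrow).isUnit
  have hcol : B *ᵥ B⁻¹.col j = Pi.single j 1 := by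
    rw [← mulVec_single_one, mulVec_mulVec, mul_nonsing_inv B hunit, one_mulVec]
  exact hB.nonneg_of_mulVec_nonneg hrow (hcol ▸ Pi.single_nonneg.mpr zero_le_one) i

end IsZMatrix

end Matrix

/-- If all off-diagonal entries of a real `n × n` matrix `A` are nonpositive and
there is a diagonal matrix `D` with strictly positive diagonal entries such that every row sum
of `A * D` is strictly positive, then `A` is invertible and every entry of `A⁻¹` is
nonnegative. -/
theorem m_matrix_inverse_nonneg
    (n : ℕ) (A : Matrix (Fin n) (Fin n) ℝ)
    (hz : ∀ i j : Fin n, i ≠ j → A i j ≤ 0)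
    (hD : ∃ d : Fin n → ℝ,
        (∀ i, 0 < d i) ∧ ∀ i : Fin n, 0 < ∑ j, (A * Matrix.diagonal d) i j) :
    IsUnit A.det ∧ ∀ i j : Fin n, 0 ≤ A⁻¹ i j := by
  obtain ⟨d, hd, hrow⟩ := hD
  have hB : (A * Matrix.diagonal d).IsZMatrix :=
    Matrix.IsZMatrix.mul_diagonal hz fun i => (hd i).le
  have hA : IsUnit A.det := by
    have := hB.det_ne_zero hrow
    rw [Matrix.det_mul] at this
    exact (left_ne_zero_of_mul this).isUnit
  have hdiag : IsUnit (Matrix.diagonal d).det := by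
    simpa [Matrix.det_diagonal, Finset.prod_ne_zero_iff] using fun i => (hd i).ne'
  have hAinv : A⁻¹ = Matrix.diagonal d * (A * Matrix.diagonal d)⁻¹ := by
    rw [Matrix.mul_inv_rev, Matrix.mul_nonsing_inv_cancel_left _ _ hdiag]
  refine ⟨hA, fun i j => ?_⟩
  rw [hAinv, Matrix.diagonal_mul]
  exact mul_nonneg (hd i).le (hB.inv_nonneg hrow i j)
end

section
/- Let n and k be natural numbers with 1 ≤ k < n. Suppose given strictly positive real numbers m_ji for all j ∈ {1,…,k}, i ∈ {1,…,n} with i ≠ j, and strictly positive reference values μ_{k+1},…,μ_n. Then there exists a unique tuple of strictly positive real numbers (μ₁,…,μ_k) such that for every j ∈ {1,…,k}, μ_j^{n−1} = Π_{i=1, i≠j}^{n} (m_ji · μ_i). -/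
/-- For `1 ≤ k < n`, given strictly positive pairwise comparison values `m j i`
(for unknown indices `j < k` and all `i ≠ j`) and strictly positive reference values `μr i`
(for `i ≥ k`), there exists a unique tuple of strictly positive values for the unknown
concepts satisfying the geometric averaging equations
`μ j ^ (n-1) = ∏_{i ≠ j} (m j i * μ i)` for every unknown index `j < k`. -/
theorem hre_geometric_existence_uniqueness
    (n k : ℕ) (hk : 1 ≤ k) (hkn : k < n)
    (m : Fin n → Fin n → ℝ)
    (hm : ∀ j i : Fin n, (j : ℕ) < k → j ≠ i → 0 < m j i)
    (μr : Fin n → ℝ)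
    (hμr : ∀ i : Fin n, k ≤ (i : ℕ) → 0 < μr i) :
    ∃! μ : Fin n → ℝ,
      (∀ i, 0 < μ i) ∧
        (∀ i : Fin n, k ≤ (i : ℕ) → μ i = μr i) ∧
        ∀ j : Fin n, (j : ℕ) < k →
          μ j ^ (n - 1) = ∏ i ∈ Finset.univ.erase j, (m j i * μ i) := by
  classical
  have hn : 1 ≤ n := le_trans hk hkn.le
  set p : Finset (Fin n) := Finset.univ.filter (fun i => (i : ℕ) < k) with hp
  set q : Finset (Fin n) := Finset.univ.filter (fun i => ¬ (i : ℕ) < k) with hq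
  have hcard : p.card = k := by
    have h : p = (Finset.univ : Finset (Fin k)).image (Fin.castLE hkn.le) := by
      ext x
      simp [hp, Fin.ext_iff, Fin.exists_iff]
    rw [h, Finset.card_image_of_injective _ (Fin.castLE_injective hkn.le)]
    simp
  have hn1 : ((n - 1 : ℕ) : ℝ) = (n : ℝ) - 1 := by
    push_cast [Nat.cast_sub hn]; ring
  set c : Fin n → ℝ := fun j =>
    (∑ i ∈ Finset.univ.erase j, Real.log (m j i)) + ∑ i ∈ q, Real.log (μr i) with hc
  -- split erase-sum
  have hsplit : ∀ (j : Fin n), (j : ℕ) < k → ∀ f : Fin n → ℝ,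
      ∑ i ∈ Finset.univ.erase j, f i = (∑ i ∈ p.erase j, f i) + ∑ i ∈ q, f i := by
    intro j hj f
    rw [← Finset.sum_filter_add_sum_filter_not (Finset.univ.erase j) (fun i => (i : ℕ) < k)]
    congr 1
    · rw [Finset.filter_erase]
    · rw [Finset.filter_erase, Finset.erase_eq_of_notMem]
      simp [hq, hj]
  -- key relation satisfied by any solution
  have key : ∀ μ : Fin n → ℝ, (∀ i, 0 < μ i) →
      (∀ i : Fin n, k ≤ (i : ℕ) → μ i = μr i) →
      (∀ j : Fin n, (j : ℕ) < k →
        μ j ^ (n - 1) = ∏ i ∈ Finset.univ.erase j, (m j i * μ i)) →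
      ∀ j : Fin n, (j : ℕ) < k →
        (n : ℝ) * Real.log (μ j) = c j + ∑ i ∈ p, Real.log (μ i) := by
    intro μ hpos href heq j hj
    have hjp : j ∈ p := by simp [hp, hj]
    have hlog := congrArg Real.log (heq j hj)
    rw [Real.log_pow, Real.log_prod] at hlog
    · have hterm : ∀ i ∈ Finset.univ.erase j, Real.log (m j i * μ i)
          = Real.log (m j i) + Real.log (μ i) := by
        intro i hi
        have hij : j ≠ i := fun h => (Finset.mem_erase.mp hi).1 h.symm
        exact Real.log_mul (hm j i hj hij).ne' (hpos i).ne'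
      rw [Finset.sum_congr rfl hterm, Finset.sum_add_distrib] at hlog
      rw [hsplit j hj (fun i => Real.log (μ i))] at hlog
      have hqeq : ∑ i ∈ q, Real.log (μ i) = ∑ i ∈ q, Real.log (μr i) := by
        apply Finset.sum_congr rfl
        intro i hi
        rw [href i (by simpa [hq] using (Finset.mem_filter.mp hi).2 |> fun h => Nat.le_of_not_lt h)]
      rw [hqeq] at hlog
      have hsum : ∑ i ∈ p.erase j, Real.log (μ i)
          = (∑ i ∈ p, Real.log (μ i)) - Real.log (μ j) := by
        rw [← Finset.add_sum_erase p _ hjp]; ring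
      rw [hsum] at hlog
      rw [hn1] at hlog
      simp only [hc]
      linarith [hlog]
    · intro i hi
      have hij : j ≠ i := fun h => (Finset.mem_erase.mp hi).1 h.symm
      exact (mul_pos (hm j i hj hij) (hpos i)).ne'
  -- construct witness
  set s : ℝ := (∑ j ∈ p, c j) / ((n : ℝ) - (k : ℝ)) with hs
  have hnk : (n : ℝ) - (k : ℝ) ≠ 0 := by
    have : (k : ℝ) < (n : ℝ) := by exact_mod_cast hkn
    linarith
  have hsum_c : ∑ j ∈ p, c j = s * ((n : ℝ) - (k : ℝ)) := by
    rw [hs, div_mul_cancel₀ _ hnk]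
  set x : Fin n → ℝ := fun j => (c j + s) / n with hx
  set w : Fin n → ℝ := fun j => if (j : ℕ) < k then Real.exp (x j) else μr j with hw
  have hnpos : (0:ℝ) < n := by exact_mod_cast (lt_of_le_of_lt (Nat.zero_le k) hkn)
  have hwpos : ∀ i, 0 < w i := by
    intro i
    by_cases hi : (i : ℕ) < k
    · simp [hw, hi, Real.exp_pos]
    · simp [hw, hi, hμr i (Nat.le_of_not_lt hi)]
  have hwref : ∀ i : Fin n, k ≤ (i : ℕ) → w i = μr i := by
    intro i hi
    simp [hw, Nat.not_lt.mpr hi]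
  have hwlog : ∀ i ∈ p, Real.log (w i) = x i := by
    intro i hi
    have : (i : ℕ) < k := (Finset.mem_filter.mp hi).2
    simp [hw, this, Real.log_exp]
  have hsum_xp : ∑ i ∈ p, x i = s := by
    simp only [hx]
    rw [← Finset.sum_div, Finset.sum_add_distrib, Finset.sum_const, hcard, hsum_c,
      nsmul_eq_mul]
    field_simp
    ring
  have hxj : ∀ j : Fin n, (j : ℕ) < k → (n : ℝ) * x j = c j + s := by
    intro j hj
    simp only [hx]
    field_simp
  have hweq : ∀ j : Fin n, (j : ℕ) < k →
      w j ^ (n - 1) = ∏ i ∈ Finset.univ.erase j, (m j i * w i) := by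
    intro j hj
    have hjp : j ∈ p := by simp [hp, hj]
    have hwj : w j = Real.exp (x j) := by simp [hw, hj]
    have hrhs : ∏ i ∈ Finset.univ.erase j, (m j i * w i)
        = Real.exp (∑ i ∈ Finset.univ.erase j, Real.log (m j i * w i)) := by
      rw [Real.exp_sum]
      apply Finset.prod_congr rfl
      intro i hi
      have hij : j ≠ i := fun h => (Finset.mem_erase.mp hi).1 h.symm
      rw [Real.exp_log (mul_pos (hm j i hj hij) (hwpos i))]
    rw [hrhs, hwj, ← Real.exp_nat_mul]
    congr 1
    have hterm : ∀ i ∈ Finset.univ.erase j, Real.log (m j i * w i)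
        = Real.log (m j i) + Real.log (w i) := by
      intro i hi
      have hij : j ≠ i := fun h => (Finset.mem_erase.mp hi).1 h.symm
      exact Real.log_mul (hm j i hj hij).ne' (hwpos i).ne'
    rw [Finset.sum_congr rfl hterm, Finset.sum_add_distrib,
      hsplit j hj (fun i => Real.log (w i))]
    have hqeq : ∑ i ∈ q, Real.log (w i) = ∑ i ∈ q, Real.log (μr i) := by
      apply Finset.sum_congr rfl
      intro i hi
      rw [hwref i (Nat.le_of_not_lt (by simpa [hq] using (Finset.mem_filter.mp hi).2))]
    rw [hqeq]
    have hsumerase : ∑ i ∈ p.erase j, Real.log (w i)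
        = (∑ i ∈ p, x i) - x j := by
      rw [Finset.sum_congr rfl (fun i hi => hwlog i (Finset.mem_of_mem_erase hi)),
        ← Finset.add_sum_erase p x hjp]
      ring
    rw [hsumerase, hsum_xp]
    have := hxj j hj
    simp only [hc] at this ⊢
    rw [hn1]
    linarith
  refine ⟨w, ⟨hwpos, hwref, hweq⟩, ?_⟩
  intro ν ⟨hνpos, hνref, hνeq⟩
  have h1 := key ν hνpos hνref hνeq
  have h2 := key w hwpos hwref hweq
  -- difference
  set d : Fin n → ℝ := fun i => Real.log (ν i) - Real.log (w i) with hd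
  have hdeq : ∀ j : Fin n, (j : ℕ) < k → (n : ℝ) * d j = ∑ i ∈ p, d i := by
    intro j hj
    simp only [hd, Finset.sum_sub_distrib]
    linarith [h1 j hj, h2 j hj]
  have hS : ∑ i ∈ p, d i = 0 := by
    have hsum : (n : ℝ) * (∑ i ∈ p, d i) = (k : ℝ) * (∑ i ∈ p, d i) := by
      calc (n : ℝ) * (∑ i ∈ p, d i) = ∑ j ∈ p, (n : ℝ) * d j := by
            rw [Finset.mul_sum]
        _ = ∑ j ∈ p, (∑ i ∈ p, d i) := by
            apply Finset.sum_congr rfl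
            intro j hj
            exact hdeq j (by simpa [hp] using (Finset.mem_filter.mp hj).2)
        _ = (k : ℝ) * (∑ i ∈ p, d i) := by
            rw [Finset.sum_const, hcard, nsmul_eq_mul]
    have hne : (n : ℝ) ≠ (k : ℝ) := by
      intro h
      exact absurd (Nat.cast_injective h) (Nat.ne_of_gt hkn)
    by_contra hS0
    exact hne (mul_right_cancel₀ hS0 hsum)
  funext i
  by_cases hi : (i : ℕ) < k
  · have hip : i ∈ p := by simp [hp, hi]
    have : d i = 0 := by
      have h := hdeq i hi
      rw [hS] at h
      have hn0 : (n : ℝ) ≠ 0 := ne_of_gt hnpos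
      exact (mul_eq_zero.mp h).resolve_left hn0
    have hlogeq : Real.log (ν i) = Real.log (w i) := by
      simp only [hd] at this; linarith
    calc ν i = Real.exp (Real.log (ν i)) := (Real.exp_log (hνpos i)).symm
      _ = Real.exp (Real.log (w i)) := by rw [hlogeq]
      _ = w i := Real.exp_log (hwpos i)
  · rw [hνref i (Nat.le_of_not_lt hi), hwref i (Nat.le_of_not_lt hi)]
end

section
/- Let n ≥ 1 and let M = (m_ij) be an n×n real matrix with strictly positive entries that is consistent, i.e. m_ij · m_jk · m_ki = 1 for all i, j, k. Define v ∈ ℝⁿ by v_i = (Π_{j=1}^{n} m_ij)^{1/n}. Then v is strictly positive and M · v = n · v, i.e. v is an eigenvector of M with eigenvalue n; consequently the rescaled principal-eigenvector ranking and the rescaled geometric-mean-of-rows ranking of M coincide. -/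
/-!
Consistency says m i k * m k j = m i j (the diagonal is 1 since m i i ^ 3 = 1), so row i of `m`
is m i k times row k. Taking geometric means, the vector v of row geometric means satisfies
m i k = v i / v k. For such a matrix, (m w) i = v i * ∑ k, w k / v k for every w: this gives
m v = n v, and shows that every eigenvector for a nonzero eigenvalue is a multiple of v, hence
has the same normalization.
-/

open Finset

namespace Matrix

variable {ι K : Type*}

def IsConsistent [Mul K] [One K] (m : Matrix ι ι K) : Prop :=
  ∀ i j k, m i j * m j k * m k i = 1

namespace IsConsistent

variable [Field K] [LinearOrder K] [IsStrictOrderedRing K] {m : Matrix ι ι K}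

theorem diag_eq_one (hm : m.IsConsistent) (hpos : ∀ i j, 0 < m i j) (i : ι) : m i i = 1 := by
  have h : m i i ^ 3 = 1 := by rw [pow_three, ← mul_assoc]; exact hm i i i
  exact (pow_eq_one_iff_of_nonneg (hpos i i).le (by norm_num)).1 h

theorem mul_eq (hm : m.IsConsistent) (hpos : ∀ i j, 0 < m i j) (i k j : ι) :
    m i k * m k j = m i j := by
  have hji : m j i * m i j = 1 := by simpa [hm.diag_eq_one hpos i] using hm j i i
  calc m i k * m k j = m i k * m k j * (m j i * m i j) := by rw [hji, mul_one]
    _ = m i j := by rw [← mul_assoc, hm i k j, one_mul]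

end IsConsistent

variable [Fintype ι]

noncomputable def geomMeanRows (m : Matrix ι ι ℝ) : ι → ℝ :=
  fun i => (∏ j, m i j) ^ ((1 : ℝ) / Fintype.card ι)

theorem geomMeanRows_pos {m : Matrix ι ι ℝ} (hpos : ∀ i j, 0 < m i j) (i : ι) :
    0 < geomMeanRows m i :=
  Real.rpow_pos_of_pos (prod_pos fun j _ => hpos i j) _

theorem IsConsistent.mul_geomMeanRows {m : Matrix ι ι ℝ} (hm : m.IsConsistent)
    (hpos : ∀ i j, 0 < m i j) (i k : ι) : m i k * geomMeanRows m k = geomMeanRows m i := by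
  have : Nonempty ι := ⟨i⟩
  have hrow : ∏ j, m i j = m i k ^ Fintype.card ι * ∏ j, m k j := by
    rw [← card_univ, ← prod_const, ← prod_mul_distrib]
    exact prod_congr rfl fun j _ => (hm.mul_eq hpos i k j).symm
  rw [geomMeanRows, geomMeanRows, hrow,
    Real.mul_rpow (pow_pos (hpos i k) _).le (prod_pos fun j _ => hpos k j).le, one_div,
    Real.pow_rpow_inv_natCast (hpos i k).le Fintype.card_ne_zero]

theorem mulVec_eq_card_smul_of_mul_eq [CommSemiring K] {m : Matrix ι ι K} {v : ι → K}
    (hv : ∀ i k, m i k * v k = v i) : m *ᵥ v = (Fintype.card ι : K) • v := by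
  ext i
  simp [mulVec, dotProduct, hv]

theorem mulVec_eq_sum_div_smul_of_mul_eq [Field K] {m : Matrix ι ι K} {v : ι → K}
    (hv : ∀ i k, m i k * v k = v i) (hv0 : ∀ k, v k ≠ 0) (w : ι → K) :
    m *ᵥ w = (∑ k, w k / v k) • v := by
  ext i
  simp only [mulVec, dotProduct, Pi.smul_apply, smul_eq_mul, sum_mul]
  refine sum_congr rfl fun k _ => ?_
  rw [← hv i k]
  field_simp [hv0 k]

theorem exists_eq_smul_of_mulVec_eq_smul [Field K] {m : Matrix ι ι K} {v w : ι → K} {c : K}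
    (hv : ∀ i k, m i k * v k = v i) (hv0 : ∀ k, v k ≠ 0) (hc : c ≠ 0)
    (hw : m *ᵥ w = c • w) : ∃ a : K, w = a • v := by
  refine ⟨c⁻¹ * ∑ k, w k / v k, ?_⟩
  rw [mul_smul, ← mulVec_eq_sum_div_smul_of_mul_eq hv hv0, hw, inv_smul_smul₀ hc]

end Matrix

theorem Finset.inv_sum_smul_smul {K : Type*} [Field K] {ι : Type*} (s : Finset ι) {a : K}
    (ha : a ≠ 0) (v : ι → K) : (∑ i ∈ s, (a • v) i)⁻¹ • (a • v) = (∑ i ∈ s, v i)⁻¹ • v := by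
  rw [smul_smul]
  congr 1
  simp only [Pi.smul_apply, smul_eq_mul, ← mul_sum, mul_inv_rev, mul_assoc,
    inv_mul_cancel₀ ha, mul_one]

open Matrix in
/-- For a consistent positive `n × n` matrix `M` (`n ≥ 1`), the vector
`v i = (∏ j, m i j) ^ (1/n)` of geometric means of rows is strictly positive and is an
eigenvector of `M` with eigenvalue `n`; consequently the rescaled principal-eigenvector
ranking and the rescaled geometric-mean-of-rows ranking coincide: any positive eigenvector `w`
of `M` for the (principal) eigenvalue `n`, rescaled so that its entries sum to `1`, equals the
rescaled geometric-mean vector. -/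
theorem consistent_geometric_mean_eigenvector
    (n : ℕ) (hn : 1 ≤ n)
    (m : Matrix (Fin n) (Fin n) ℝ)
    (hmpos : ∀ i j, 0 < m i j)
    (hcons : ∀ i j k : Fin n, m i j * m j k * m k i = 1) :
    (∀ i : Fin n, 0 < (∏ j, m i j) ^ ((1 : ℝ) / n)) ∧
      m.mulVec (fun i => (∏ j, m i j) ^ ((1 : ℝ) / n)) =
        (n : ℝ) • (fun i => (∏ j, m i j) ^ ((1 : ℝ) / n)) ∧
      ∀ w : Fin n → ℝ, (∀ i, 0 < w i) →
        m.mulVec w = (n : ℝ) • w →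
        (∑ i, w i)⁻¹ • w =
          (∑ i, (∏ j, m i j) ^ ((1 : ℝ) / n))⁻¹ •
            (fun i => (∏ j, m i j) ^ ((1 : ℝ) / n)) := by
  have hv (i : Fin n) : (∏ j, m i j) ^ ((1 : ℝ) / n) = geomMeanRows m i := by
    rw [geomMeanRows, Fintype.card_fin]
  have hratio := IsConsistent.mul_geomMeanRows hcons hmpos
  have hv0 : ∀ k, geomMeanRows m k ≠ 0 := fun k => (geomMeanRows_pos hmpos k).ne'
  simp only [hv]
  refine ⟨geomMeanRows_pos hmpos, by simpa using mulVec_eq_card_smul_of_mul_eq hratio, ?_⟩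
  intro w hw hmw
  obtain ⟨a, rfl⟩ := exists_eq_smul_of_mulVec_eq_smul hratio hv0 (by positivity) hmw
  have ha : a ≠ 0 := left_ne_zero_of_mul (hw ⟨0, hn⟩).ne'
  exact inv_sum_smul_smul univ ha _
end
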